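/- arXiv:1605.06033 — 2 statements merged into one kernel-verified Lean document; each statement's English description precedes it below -/
import Mathlib

section
/- Let χ ∈ L'^* be the linear functional with χ(x_i) = 1 for i = 1, …, k−2, χ(x_k) = 1, and χ(x_{k−1}) = χ(D) = χ(D') = 0. Then the coadjoint stabilizer L'_χ = {X ∈ L' : χ([X, Y]) = 0 for all Y ∈ L'} has dimension at most k−2. -/
universe u v w

open Module

/-- The coadjoint stabilizer `g_χ = {X ∈ g : χ([X,Y]) = 0 for all Y ∈ g}` of a linear
functional `χ` on a Lie algebra `g`, as a linear subspace of `g`. -/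
def coadjointStabilizer (𝕜 : Type u) [Field 𝕜] (g : Type v) [LieRing g] [LieAlgebra 𝕜 g]
    (χ : Module.Dual 𝕜 g) : Submodule 𝕜 g where
  carrier := {X | ∀ Y : g, χ ⁅X, Y⁆ = 0}
  add_mem' := by intro a b ha hb; intro Y; rw [add_lie, map_add, ha Y, hb Y, add_zero]
  zero_mem' := by intro Y; rw [zero_lie, map_zero]
  smul_mem' := by intro c a ha; intro Y; rw [smul_lie, map_smul, ha Y, smul_zero]

/-- `b` is a basis of the Lie algebra `L'` of the paper: `Sum.inl i ↦ x_{i+1}`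
(for `i : Fin k`), `Sum.inr 0 ↦ D`, `Sum.inr 1 ↦ D'`, where the `x_i` commute,
`[D, D'] = 0`, `[D, x_i] = [D', x_i] = x_i` for `i = 1, …, k-2`, `[D, x_{k-1}] = x_k`,
`[D', x_{k-1}] = 0` and `[D, x_k] = [D', x_k] = 0`. -/
def IsL'Basis {𝕜 : Type u} [Field 𝕜] {L' : Type v} [LieRing L'] [LieAlgebra 𝕜 L']
    {k : ℕ} (b : Basis (Fin k ⊕ Fin 2) 𝕜 L') : Prop :=
  (∀ i j : Fin k, ⁅b (Sum.inl i), b (Sum.inl j)⁆ = 0) ∧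
  (⁅b (Sum.inr 0), b (Sum.inr 1)⁆ = 0) ∧
  (∀ i : Fin k, (i : ℕ) < k - 2 →
      ⁅b (Sum.inr 0), b (Sum.inl i)⁆ = b (Sum.inl i) ∧
      ⁅b (Sum.inr 1), b (Sum.inl i)⁆ = b (Sum.inl i)) ∧
  (∀ i j : Fin k, (i : ℕ) = k - 2 → (j : ℕ) = k - 1 →
      ⁅b (Sum.inr 0), b (Sum.inl i)⁆ = b (Sum.inl j) ∧
      ⁅b (Sum.inr 1), b (Sum.inl i)⁆ = 0) ∧
  (∀ i : Fin k, (i : ℕ) = k - 1 →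
      ⁅b (Sum.inr 0), b (Sum.inl i)⁆ = 0 ∧ ⁅b (Sum.inr 1), b (Sum.inl i)⁆ = 0)

/-!
The stabilizer `L'_χ` is the radical of the alternating form `B(X, Y) = χ ⁅X, Y⁆`, so its
codimension is at least the rank of any block `(B(Zᵢ, Yⱼ))ᵢⱼ` of the Gram matrix of `B`.
For `Z = (D, D', x₁, x_{k-1})` and `Y = (x_{k-1}, x₁, D', D)` this block is upper triangular
with diagonal `(1, 1, -1, -1)`, hence of rank `4`, while `dim L' = k + 2`.
-/

section CoadjointStabilizer

variable {𝕜 : Type u} [Field 𝕜] {g : Type v} [LieRing g] [LieAlgebra 𝕜 g]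

def coadjointPairing (χ : Module.Dual 𝕜 g) {κ : Type w} (Y : κ → g) : g →ₗ[𝕜] κ → 𝕜 :=
  LinearMap.pi fun j => -(χ ∘ₗ LieAlgebra.ad 𝕜 g (Y j))

@[simp]
theorem coadjointPairing_apply (χ : Module.Dual 𝕜 g) {κ : Type w} (Y : κ → g) (X : g) (j : κ) :
    coadjointPairing χ Y X j = χ ⁅X, Y j⁆ := by
  simp only [coadjointPairing, LinearMap.pi_apply, LinearMap.neg_apply, LinearMap.comp_apply,
    LieAlgebra.ad_apply]
  rw [← map_neg, lie_skew]

theorem coadjointStabilizer_le_ker_coadjointPairing (χ : Module.Dual 𝕜 g) {κ : Type w}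
    (Y : κ → g) : coadjointStabilizer 𝕜 g χ ≤ LinearMap.ker (coadjointPairing χ Y) :=
  fun X hX => funext fun j => by simpa using hX (Y j)

theorem finrank_coadjointStabilizer_add_card_le [FiniteDimensional 𝕜 g] (χ : Module.Dual 𝕜 g)
    {ι κ : Type w} [Fintype ι] (Z : ι → g) (Y : κ → g)
    (hZY : LinearIndependent 𝕜 fun i j => χ ⁅Z i, Y j⁆) :
    finrank 𝕜 (coadjointStabilizer 𝕜 g χ) + Fintype.card ι ≤ finrank 𝕜 g := by
  have hrange : Fintype.card ι ≤ finrank 𝕜 (LinearMap.range (coadjointPairing χ Y)) := by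
    refine LinearIndependent.fintype_card_le_finrank
      (b := fun i => (⟨_, LinearMap.mem_range_self _ (Z i)⟩ :
        LinearMap.range (coadjointPairing χ Y))) ?_
    refine LinearIndependent.of_comp (LinearMap.range _).subtype ?_
    convert hZY using 1
    ext i j
    simp
  have hker := Submodule.finrank_mono (coadjointStabilizer_le_ker_coadjointPairing χ Y)
  have := LinearMap.finrank_range_add_finrank_ker (coadjointPairing χ Y)
  omega

theorem finrank_coadjointStabilizer_add_four_le [FiniteDimensional 𝕜 g] (χ : Module.Dual 𝕜 g)
    {D D' x y z : g} (hDD' : ⁅D, D'⁆ = 0) (hxy : ⁅x, y⁆ = 0) (hDx : ⁅D, x⁆ = x) (hD'x : ⁅D', x⁆ = x)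
    (hDy : ⁅D, y⁆ = z) (hD'y : ⁅D', y⁆ = 0) (hχx : χ x = 1) (hχz : χ z = 1) :
    finrank 𝕜 (coadjointStabilizer 𝕜 g χ) + 4 ≤ finrank 𝕜 g := by
  have hD'D : ⁅D', D⁆ = 0 := by rw [← lie_skew, hDD', neg_zero]
  have hyx : ⁅y, x⁆ = 0 := by rw [← lie_skew, hxy, neg_zero]
  have hxD : ⁅x, D⁆ = -x := by rw [← lie_skew, hDx]
  have hxD' : ⁅x, D'⁆ = -x := by rw [← lie_skew, hD'x]
  have hyD : ⁅y, D⁆ = -z := by rw [← lie_skew, hDy]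
  have hyD' : ⁅y, D'⁆ = 0 := by rw [← lie_skew, hD'y, neg_zero]
  have hgram : Matrix.of (fun i j => χ ⁅![D, D', x, y] i, ![y, x, D', D] j⁆) =
      !![1, 1, 0, 0; 0, 1, 0, 0; 0, 0, -1, -1; 0, 0, 0, -1] := by
    ext i j
    fin_cases i <;> fin_cases j <;>
      simp [hDD', hxy, hDx, hD'x, hDy, hD'y, hD'D, hyx, hxD, hxD', hyD, hyD', hχx, hχz]
  have hdet : (Matrix.of fun i j => χ ⁅![D, D', x, y] i, ![y, x, D', D] j⁆).det ≠ 0 := by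
    rw [hgram]
    simp [Matrix.det_succ_row_zero, Fin.sum_univ_succ]
  simpa using finrank_coadjointStabilizer_add_card_le χ _ _
    (Matrix.linearIndependent_rows_of_det_ne_zero hdet)

end CoadjointStabilizer

theorem stmt8_general (k : ℕ) (hk : 3 ≤ k)
    (𝕜 : Type u) [Field 𝕜]
    (L' : Type v) [LieRing L'] [LieAlgebra 𝕜 L']
    (b : Basis (Fin k ⊕ Fin 2) 𝕜 L') (hb : IsL'Basis b)
    (χ : Module.Dual 𝕜 L')
    (hχ1 : ∀ i : Fin k, (i : ℕ) ≠ k - 2 → χ (b (Sum.inl i)) = 1) :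
    Module.finrank 𝕜 (coadjointStabilizer 𝕜 L' χ) ≤ k - 2 := by
  have : FiniteDimensional 𝕜 L' := b.finiteDimensional_of_finite
  obtain ⟨hcomm, hDD', hsmall, hmid, -⟩ := hb
  let first : Fin k := ⟨0, by omega⟩
  let penult : Fin k := ⟨k - 2, by omega⟩
  let last : Fin k := ⟨k - 1, by omega⟩
  have hdim : finrank 𝕜 L' = k + 2 := by simp [finrank_eq_card_basis b]
  obtain ⟨hDx, hD'x⟩ := hsmall first (show 0 < k - 2 by omega)
  obtain ⟨hDy, hD'y⟩ := hmid penult last rfl rfl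
  have := finrank_coadjointStabilizer_add_four_le χ hDD' (hcomm first penult) hDx hD'x hDy hD'y
    (hχ1 first (show 0 ≠ k - 2 by omega)) (hχ1 last (show k - 1 ≠ k - 2 by omega))
  omega

/-- for the functional `χ ∈ L'^*` with `χ(x_i) = 1` for `i = 1, …, k-2`,
`χ(x_k) = 1`, and `χ(x_{k-1}) = χ(D) = χ(D') = 0`, the coadjoint stabilizer `L'_χ`
has dimension at most `k - 2`. -/
theorem stmt8 (p k : ℕ) (hp : p.Prime) (hk : 3 ≤ k)
    (𝕜 : Type u) [Field 𝕜] [IsAlgClosed 𝕜] [CharP 𝕜 p]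
    (L' : Type v) [LieRing L'] [LieAlgebra 𝕜 L']
    (b : Basis (Fin k ⊕ Fin 2) 𝕜 L') (hb : IsL'Basis b)
    (χ : Module.Dual 𝕜 L')
    (hχ1 : ∀ i : Fin k, (i : ℕ) ≠ k - 2 → χ (b (Sum.inl i)) = 1)
    (hχ2 : ∀ i : Fin k, (i : ℕ) = k - 2 → χ (b (Sum.inl i)) = 0)
    (hχ3 : ∀ j : Fin 2, χ (b (Sum.inr j)) = 0) :
    Module.finrank 𝕜 (coadjointStabilizer 𝕜 L' χ) ≤ k - 2 :=
  stmt8_general k hk 𝕜 L' b hb χ hχ1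
end

section
/- Let E = Σ_{i=0}^{m} ad(X_i)^{p^i} with X_0, …, X_m ∈ L be an element of the restricted closure of ad(L). Then there is a surjective 𝕜-algebra homomorphism Φ : U(L_E) → U(L_{0}) which is the identity on L and sends E to Σ_{i=0}^{m} X_i^{p^i} + E_0, where L_0 = L × 𝕜E_0 is the semidirect product by the zero derivation (the direct product of L with a one-dimensional abelian Lie algebra spanned by E_0) and the powers X_i^{p^i} are taken in U(L_0). -/
/-!
In characteristic `p`, `ad(a)^(p^i) = ad(a^(p^i))` in every associative algebra, so in `U(L_0)` the
element `t = Σ X_i^(p^i)` satisfies `[t, x] = Σ ad(X_i)^(p^i) x = E x` for `x ∈ L`, while `E_0` is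
central over `L`. Hence `x ↦ x, E ↦ t + E_0` is a Lie map `L_E → U(L_0)` and induces `Φ`.
Symmetrically `x ↦ x, E_0 ↦ E - Σ X_i^(p^i)` induces `Ψ : U(L_0) → U(L_E)`, and `Φ ∘ Ψ = id`
because the two maps agree on generators; so `Φ` is surjective.
-/

universe u v w

open Module

/-- A realization of the semidirect product `L_E = L ⋊ 𝕜·E` of a Lie algebra `L` by a
derivation `E` of `L`: a Lie algebra `g` together with an injective Lie algebra morphism
`incl : L → g` and an element `e ∉ incl(L)` such that `[e, incl x] = incl (E x)` for all
`x ∈ L`, and such that `g` is spanned by `incl(L)` and `e`.  Any two realizations of `L_E`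
are canonically isomorphic, so this characterizes `L_E` up to isomorphism. -/
structure SemidirectRealization (𝕜 : Type u) [Field 𝕜] (L : Type v) [LieRing L]
    [LieAlgebra 𝕜 L] (E : Module.End 𝕜 L) (g : Type w) [LieRing g] [LieAlgebra 𝕜 g] where
  incl : L →ₗ⁅𝕜⁆ g
  e : g
  injective : Function.Injective incl
  e_notMem : ∀ x : L, incl x ≠ e
  lie_e : ∀ x : L, ⁅e, incl x⁆ = incl (E x)
  spans : ∀ y : g, ∃ (x : L) (c : 𝕜), y = incl x + c • e

attribute [local instance 100] LieRing.ofAssociativeRing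

open LieAlgebra UniversalEnvelopingAlgebra

theorem LieHom.lie_apply_add_smul {𝕜 L M : Type*} [CommRing 𝕜] [LieRing L] [LieAlgebra 𝕜 L]
    [LieRing M] [LieAlgebra 𝕜 M] {E : Module.End 𝕜 L} (f : L →ₗ⁅𝕜⁆ M) {t : M}
    (ht : ∀ y, ⁅t, f y⁆ = f (E y)) (x y : L) (c d : 𝕜) :
    ⁅f x + c • t, f y + d • t⁆ = f (⁅x, y⁆ + c • E y - d • E x) := by
  simp only [lie_add, add_lie, lie_smul, smul_lie, lie_self, ← lie_skew _ t, ht, LieHom.map_lie,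
    map_add, map_sub, map_smul]
  module

namespace SemidirectRealization

variable {𝕜 : Type u} [Field 𝕜] {L : Type v} [LieRing L] [LieAlgebra 𝕜 L] {E : Module.End 𝕜 L}
  {g : Type w} [LieRing g] [LieAlgebra 𝕜 g] (r : SemidirectRealization 𝕜 L E g)

theorem incl_add_smul_e_injective :
    Function.Injective fun xc : L × 𝕜 => r.incl xc.1 + xc.2 • r.e := by
  rintro ⟨x, c⟩ ⟨x', c'⟩ h
  obtain rfl : c = c' := by
    by_contra hc
    have hdiff : r.incl (x - x') = (c' - c) • r.e := by
      rw [map_sub, sub_smul]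
      linear_combination (norm := module) h
    apply r.e_notMem ((c' - c)⁻¹ • (x - x'))
    rw [map_smul, hdiff, smul_smul, inv_mul_cancel₀ (sub_ne_zero.2 (Ne.symm hc)), one_smul]
  exact Prod.ext (r.injective (add_right_cancel h)) rfl

noncomputable def equivProd : (L × 𝕜) ≃ₗ[𝕜] g :=
  .ofBijective (r.incl.toLinearMap.coprod (LinearMap.toSpanSingleton 𝕜 g r.e))
    ⟨r.incl_add_smul_e_injective, fun y => by
      obtain ⟨x, c, rfl⟩ := r.spans y
      exact ⟨(x, c), rfl⟩⟩

theorem equivProd_apply (x : L) (c : 𝕜) : r.equivProd (x, c) = r.incl x + c • r.e := rfl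

variable {M : Type*} [LieRing M] [LieAlgebra 𝕜 M]

noncomputable def liftLinear (u : L →ₗ[𝕜] M) (T : M) : g →ₗ[𝕜] M :=
  u.coprod (LinearMap.toSpanSingleton 𝕜 M T) ∘ₗ r.equivProd.symm

theorem liftLinear_apply (u : L →ₗ[𝕜] M) (T : M) (x : L) (c : 𝕜) :
    r.liftLinear u T (r.incl x + c • r.e) = u x + c • T := by
  rw [← equivProd_apply]
  simp [liftLinear]

noncomputable def lift (u : L →ₗ⁅𝕜⁆ M) (T : M) (hT : ∀ y, ⁅T, u y⁆ = u (E y)) : g →ₗ⁅𝕜⁆ M :=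
  { r.liftLinear u T with
    map_lie' := fun {a b} => by
      obtain ⟨x, c, rfl⟩ := r.spans a
      obtain ⟨y, d, rfl⟩ := r.spans b
      have h_incl := r.liftLinear_apply u T (⁅x, y⁆ + c • E y - d • E x) 0
      rw [zero_smul, add_zero, zero_smul, add_zero] at h_incl
      change r.liftLinear u T _ = ⁅r.liftLinear u T _, r.liftLinear u T _⁆
      rw [r.incl.lie_apply_add_smul r.lie_e, h_incl, r.liftLinear_apply, r.liftLinear_apply]
      exact (u.lie_apply_add_smul hT x y c d).symm }

theorem lift_apply (u : L →ₗ⁅𝕜⁆ M) (T : M) (hT : ∀ y, ⁅T, u y⁆ = u (E y)) (x : L) (c : 𝕜) :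
    r.lift u T hT (r.incl x + c • r.e) = u x + c • T :=
  r.liftLinear_apply (u : L →ₗ[𝕜] M) T x c

@[simp]
theorem lift_incl (u : L →ₗ⁅𝕜⁆ M) (T : M) (hT : ∀ y, ⁅T, u y⁆ = u (E y)) (x : L) :
    r.lift u T hT (r.incl x) = u x := by
  simpa using r.lift_apply u T hT x 0

@[simp]
theorem lift_e (u : L →ₗ⁅𝕜⁆ M) (T : M) (hT : ∀ y, ⁅T, u y⁆ = u (E y)) :
    r.lift u T hT r.e = T := by
  simpa using r.lift_apply u T hT 0 1

theorem lie_ι_e (x : L) : ⁅ι 𝕜 r.e, ι 𝕜 (r.incl x)⁆ = ι 𝕜 (r.incl (E x)) := by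
  rw [← LieHom.map_lie, r.lie_e]

variable {A : Type*} [Ring A] [Algebra 𝕜 A]

theorem algHom_ext {φ ψ : UniversalEnvelopingAlgebra 𝕜 g →ₐ[𝕜] A}
    (h_incl : ∀ x, φ (ι 𝕜 (r.incl x)) = ψ (ι 𝕜 (r.incl x))) (h_e : φ (ι 𝕜 r.e) = ψ (ι 𝕜 r.e)) :
    φ = ψ := by
  ext y
  obtain ⟨x, c, rfl⟩ := r.spans y
  simp only [LieHom.coe_comp, Function.comp_apply, AlgHom.coe_toLieHom, map_add, map_smul, h_incl,
    h_e]

end SemidirectRealization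

section CharP

variable {𝕜 A L : Type*} [Field 𝕜] [Ring A] [Algebra 𝕜 A] [LieRing L] [LieAlgebra 𝕜 L]

theorem lie_pow_expChar_pow (p : ℕ) [ExpChar 𝕜 p] (a b : A) (n : ℕ) :
    ⁅a ^ p ^ n, b⁆ = (ad 𝕜 A a ^ p ^ n) b := by
  -- `Module.End 𝕜 A` has characteristic `p` only when `A` is nontrivial.
  rcases subsingleton_or_nontrivial A with _ | _
  · exact Subsingleton.elim _ _
  have : ExpChar (Module.End 𝕜 A) p :=
    expChar_of_injective_algebraMap (algebraMap 𝕜 _).injective p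
  rw [ad_eq_lmul_left_sub_lmul_right, Pi.sub_apply,
    sub_pow_expChar_pow_of_commute p n (LinearMap.commute_mulLeft_right a a), LinearMap.sub_apply,
    LinearMap.pow_mulLeft, LinearMap.pow_mulRight, LinearMap.mulLeft_apply,
    LinearMap.mulRight_apply, LieRing.of_associative_ring_bracket]

theorem LieHom.map_ad_pow_apply {L' : Type*} [LieRing L'] [LieAlgebra 𝕜 L'] (f : L →ₗ⁅𝕜⁆ L')
    (x y : L) (n : ℕ) : f ((ad 𝕜 L x ^ n) y) = (ad 𝕜 L' (f x) ^ n) (f y) :=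
  (LinearMap.congr_fun (Module.End.commute_pow_left_of_commute
    (g₂ := ad 𝕜 L' (f x)) (f := f.toLinearMap) (g := ad 𝕜 L x) (by ext; simp) n) y).symm

theorem LieHom.lie_sum_pow_expChar_pow (p : ℕ) [ExpChar 𝕜 p] (u : L →ₗ⁅𝕜⁆ A) (s : Finset ℕ)
    (X : ℕ → L) (y : L) :
    ⁅∑ i ∈ s, u (X i) ^ p ^ i, u y⁆ = u ((∑ i ∈ s, ad 𝕜 L (X i) ^ p ^ i) y) := by
  simp only [sum_lie, LinearMap.sum_apply, map_sum, u.map_ad_pow_apply]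
  exact Finset.sum_congr rfl fun i _ => lie_pow_expChar_pow p _ _ i

end CharP

theorem stmt15_general (p : ℕ) (hp : 0 < p)
    (𝕜 : Type u) [Field 𝕜] [CharP 𝕜 p]
    (L : Type v) [LieRing L] [LieAlgebra 𝕜 L]
    (m : ℕ) (X : ℕ → L) (E : Module.End 𝕜 L)
    (hE : E = ∑ i ∈ Finset.range (m + 1), (LieAlgebra.ad 𝕜 L (X i)) ^ p ^ i)
    (gE : Type w) [LieRing gE] [LieAlgebra 𝕜 gE]
    (g0 : Type w) [LieRing g0] [LieAlgebra 𝕜 g0]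
    (r : SemidirectRealization 𝕜 L E gE)
    (r0 : SemidirectRealization 𝕜 L (0 : Module.End 𝕜 L) g0) :
    ∃ Φ : UniversalEnvelopingAlgebra 𝕜 gE →ₐ[𝕜] UniversalEnvelopingAlgebra 𝕜 g0,
      Function.Surjective Φ ∧
      (∀ x : L, Φ (UniversalEnvelopingAlgebra.ι 𝕜 (r.incl x))
          = UniversalEnvelopingAlgebra.ι 𝕜 (r0.incl x)) ∧
      Φ (UniversalEnvelopingAlgebra.ι 𝕜 r.e)
        = (∑ i ∈ Finset.range (m + 1),
            (UniversalEnvelopingAlgebra.ι 𝕜 (r0.incl (X i))) ^ p ^ i)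
          + UniversalEnvelopingAlgebra.ι 𝕜 r0.e := by
  have : NeZero p := ⟨hp.ne'⟩
  have : Fact p.Prime := CharP.char_is_prime_of_pos 𝕜 p
  set u := (ι 𝕜).comp r0.incl
  set v := (ι 𝕜).comp r.incl
  have hu (y : L) : ⁅∑ i ∈ Finset.range (m + 1), u (X i) ^ p ^ i + ι 𝕜 r0.e, u y⁆ = u (E y) := by
    have h_central : ⁅ι 𝕜 r0.e, u y⁆ = 0 :=
      (r0.lie_ι_e y).trans (by rw [LinearMap.zero_apply, map_zero, map_zero])
    rw [add_lie, u.lie_sum_pow_expChar_pow p, ← hE, h_central, add_zero]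
  have hv (y : L) : ⁅ι 𝕜 r.e - ∑ i ∈ Finset.range (m + 1), v (X i) ^ p ^ i, v y⁆
      = v ((0 : Module.End 𝕜 L) y) := by
    rw [sub_lie, v.lie_sum_pow_expChar_pow p, ← hE, LinearMap.zero_apply, map_zero, sub_eq_zero]
    exact r.lie_ι_e y
  let Φ := lift 𝕜 (r.lift u _ hu)
  let Ψ := lift 𝕜 (r0.lift v _ hv)
  have hΦ_incl (x : L) : Φ (ι 𝕜 (r.incl x)) = ι 𝕜 (r0.incl x) := by
    rw [lift_ι_apply, r.lift_incl]
    rfl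
  have hΦ_e :
      Φ (ι 𝕜 r.e) = ∑ i ∈ Finset.range (m + 1), ι 𝕜 (r0.incl (X i)) ^ p ^ i + ι 𝕜 r0.e := by
    rw [lift_ι_apply, r.lift_e]
    rfl
  have hΦΨ : Φ.comp Ψ = AlgHom.id 𝕜 _ := by
    refine r0.algHom_ext (fun x => ?_) ?_
    · rw [AlgHom.comp_apply, lift_ι_apply, r0.lift_incl]
      exact hΦ_incl x
    · rw [AlgHom.comp_apply, lift_ι_apply, r0.lift_e, map_sub, hΦ_e, map_sum]
      simp only [map_pow, v, LieHom.comp_apply, hΦ_incl, AlgHom.id_apply, add_sub_cancel_left]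
  exact ⟨Φ, fun z => ⟨Ψ z, AlgHom.congr_fun hΦΨ z⟩, hΦ_incl, hΦ_e⟩

/-- if `E = Σ_{i=0}^{m} ad(X_i)^{p^i}` then there is a surjective algebra
homomorphism `Φ : U(L_E) → U(L_0)` (where `L_0 = L × 𝕜E_0` is the semidirect product by the
zero derivation) which is the identity on `L` and sends `E` to `Σ_{i=0}^{m} X_i^{p^i} + E_0`,
the powers `X_i^{p^i}` being taken in `U(L_0)`. -/
theorem stmt15 (p : ℕ) (hp : 0 < p)
    (𝕜 : Type u) [Field 𝕜] [CharP 𝕜 p]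
    (L : Type v) [LieRing L] [LieAlgebra 𝕜 L] [FiniteDimensional 𝕜 L]
    (m : ℕ) (X : ℕ → L) (E : Module.End 𝕜 L)
    (hE : E = ∑ i ∈ Finset.range (m + 1), (LieAlgebra.ad 𝕜 L (X i)) ^ p ^ i)
    (gE : Type w) [LieRing gE] [LieAlgebra 𝕜 gE]
    (g0 : Type w) [LieRing g0] [LieAlgebra 𝕜 g0]
    (r : SemidirectRealization 𝕜 L E gE)
    (r0 : SemidirectRealization 𝕜 L (0 : Module.End 𝕜 L) g0) :
    ∃ Φ : UniversalEnvelopingAlgebra 𝕜 gE →ₐ[𝕜] UniversalEnvelopingAlgebra 𝕜 g0,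
      Function.Surjective Φ ∧
      (∀ x : L, Φ (UniversalEnvelopingAlgebra.ι 𝕜 (r.incl x))
          = UniversalEnvelopingAlgebra.ι 𝕜 (r0.incl x)) ∧
      Φ (UniversalEnvelopingAlgebra.ι 𝕜 r.e)
        = (∑ i ∈ Finset.range (m + 1),
            (UniversalEnvelopingAlgebra.ι 𝕜 (r0.incl (X i))) ^ p ^ i)
          + UniversalEnvelopingAlgebra.ι 𝕜 r0.e :=
  stmt15_general p hp 𝕜 L m X E hE gE g0 r r0
end
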